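/- Let s ≥ 3 and N ≥ 1. Suppose φ : Σ_s → ℝ^N is bounded by some R > 0 and exponentially locally determined. If for some ξ ∈ Σ_s the rotation vector ρ_φ(ξ) = lim_{n→∞} (1/n) Σ_{i=0}^{n−1} φ(σ^i ξ) exists, then for every ε > 0 there exists a periodic sequence η ∈ Σ_s such that ‖ρ_φ(ξ) − ρ_φ(η)‖ < ε. In particular, the set of rotation vectors of periodic sequences is dense in the pointwise rotation set J_φ. -/

import Mathlib

/-!
Take `n = L + 2` so large that `A_n(ξ)` is `ε/2`-close to `ρ` and `D / n < ε / 2`, where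
`D = 2C/(1-δ) + 2R`. Closing the word `ξ₀ ⋯ ξ_L` with a symbol different from `ξ_L` and `ξ₀`
(possible as `s ≥ 3`) and repeating it gives an admissible `n`-periodic `η`, whose rotation
vector is `A_n(η)` since Cesàro means of a periodic sequence converge to the mean over a period.
For `i ≤ L` the points `σⁱξ` and `σⁱη` agree on `[-i, L - i]`, so the `i`-th terms of the two
Birkhoff sums differ by at most `C(δⁱ + δ^(L-i))`; these add up to at most `2C/(1-δ)`, and the
last term contributes at most `2R`. Hence `‖A_n(ξ) - A_n(η)‖ ≤ D / n`.
-/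

open Filter Topology

/-- The symbol space `Σ_s`: bi-infinite admissible sequences over an alphabet with
`s` symbols (represented by `Fin s`), i.e. `ξ_i ≠ ξ_{i+1}` for all `i ∈ ℤ`. -/
def SymbSpace (s : ℕ) : Type := {ξ : ℤ → Fin s // ∀ i : ℤ, ξ i ≠ ξ (i + 1)}

/-- The (left) shift map `σ : Σ_s → Σ_s`, `(σξ)_i = ξ_{i+1}`. -/
def shift {s : ℕ} (ξ : SymbSpace s) : SymbSpace s :=
  ⟨fun i => ξ.1 (i + 1), fun i => ξ.2 (i + 1)⟩

/-- Birkhoff average `A_n(ξ) = (1/n) ∑_{i=0}^{n-1} φ(σ^i ξ)`. -/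
noncomputable def birk {s N : ℕ} (φ : SymbSpace s → EuclideanSpace ℝ (Fin N))
    (n : ℕ) (ξ : SymbSpace s) : EuclideanSpace ℝ (Fin N) :=
  (n : ℝ)⁻¹ • ∑ i ∈ Finset.range n, φ (shift^[i] ξ)

/-- `ρ` is the rotation vector `ρ_φ(ξ)`, i.e. the limit of the Birkhoff averages exists
and equals `ρ`. -/
def HasRotVec {s N : ℕ} (φ : SymbSpace s → EuclideanSpace ℝ (Fin N))
    (ξ : SymbSpace s) (ρ : EuclideanSpace ℝ (Fin N)) : Prop :=
  Tendsto (fun n => birk φ n ξ) atTop (nhds ρ)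

/-- `φ` is exponentially locally determined: there are `C > 0` and `δ ∈ (0,1)` such that
whenever `ξ_j = ξ'_j` for all `-m ≤ j ≤ m'`, one has `‖φ(ξ) - φ(ξ')‖ ≤ C(δ^m + δ^{m'})`. -/
def ExpLocDet {s N : ℕ} (φ : SymbSpace s → EuclideanSpace ℝ (Fin N)) : Prop :=
  ∃ C : ℝ, 0 < C ∧ ∃ δ : ℝ, 0 < δ ∧ δ < 1 ∧
    ∀ (m m' : ℕ) (ξ ξ' : SymbSpace s),
      (∀ j : ℤ, -(m : ℤ) ≤ j → j ≤ (m' : ℤ) → ξ.1 j = ξ'.1 j) →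
      ‖φ ξ - φ ξ'‖ ≤ C * (δ ^ m + δ ^ m')

theorem Function.Periodic.tendsto_cesaro_smul {E : Type*} [NormedAddCommGroup E]
    [NormedSpace ℝ E] {a : ℕ → E} {q : ℕ} (ha : Function.Periodic a q) (hq : 0 < q) :
    Tendsto (fun n : ℕ => (n : ℝ)⁻¹ • ∑ i ∈ Finset.range n, a i) atTop
      (𝓝 ((q : ℝ)⁻¹ • ∑ i ∈ Finset.range q, a i)) := by
  set S := ∑ i ∈ Finset.range q, a i
  -- the partial sums deviate from linear growth by a `q`-periodic, hence bounded, error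
  set g : ℕ → E := fun n => ∑ i ∈ Finset.range n, a i - ((n : ℝ) / q) • S
  have hg : Function.Periodic g q := fun n => by
    have hsum : ∑ i ∈ Finset.range (n + q), a i = S + ∑ i ∈ Finset.range n, a i := by
      rw [add_comm n q, Finset.sum_range_add]
      exact congrArg _ (Finset.sum_congr rfl fun i _ => add_comm q i ▸ ha i)
    have hq' : (q : ℝ) ≠ 0 := by positivity
    simp only [g, hsum, Nat.cast_add, add_div, div_self hq', add_smul, one_smul]
    abel
  have hg_bdd : ∀ n, ‖g n‖ ≤ ∑ i ∈ Finset.range q, ‖g i‖ := fun n =>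
    hg.map_mod_nat n ▸ Finset.single_le_sum (f := fun i => ‖g i‖) (fun _ _ => norm_nonneg _)
      (Finset.mem_range.2 (Nat.mod_lt n hq))
  have hlim : Tendsto (fun n : ℕ => (n : ℝ)⁻¹ • g n) atTop (𝓝 0) :=
    NormedField.tendsto_zero_smul_of_tendsto_zero_of_bounded
      tendsto_inv_atTop_nhds_zero_nat (isBoundedUnder_of ⟨_, hg_bdd⟩)
  refine (zero_add ((q : ℝ)⁻¹ • S) ▸ hlim.add_const ((q : ℝ)⁻¹ • S)).congr' ?_
  filter_upwards [eventually_ne_atTop 0] with n hn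
  have hn' : (n : ℝ) ≠ 0 := Nat.cast_ne_zero.2 hn
  simp only [g, smul_sub, smul_smul, inv_mul_cancel_left₀ hn', sub_add_cancel, div_eq_mul_inv]

lemma shift_iterate_apply {s : ℕ} (ξ : SymbSpace s) (i : ℕ) (j : ℤ) :
    (shift^[i] ξ).1 j = ξ.1 (j + i) := by
  induction i generalizing j with
  | zero => simp
  | succ n ih =>
    rw [Function.iterate_succ_apply', shift, ih]
    push_cast
    ring_nf

lemma hasRotVec_birk_of_periodic {s N : ℕ} (φ : SymbSpace s → EuclideanSpace ℝ (Fin N))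
    {η : SymbSpace s} {q : ℕ} (hq : 0 < q) (hη : shift^[q] η = η) :
    HasRotVec φ η (birk φ q η) :=
  Function.Periodic.tendsto_cesaro_smul
    (fun i => by simp only [Function.iterate_add_apply, hη]) hq

lemma Function.Periodic.ne_add_one {α : Type*} {f : ℤ → α} {p : ℤ} (hf : Function.Periodic f p)
    (hp : 0 < p) (h : ∀ i, 0 ≤ i → i < p → f i ≠ f (i + 1)) (i : ℤ) : f i ≠ f (i + 1) := by
  have hi : i - i / p * p = i % p := by rw [Int.emod_def, mul_comm]
  rw [← hf.sub_int_mul_eq (i / p), ← hf.sub_int_mul_eq (n := i / p) (x := i + 1),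
    add_sub_right_comm, Int.cast_id, hi]
  exact h _ (Int.emod_nonneg i hp.ne') (Int.emod_lt_of_pos i hp)

/-- The periodic sequence repeating the word `ξ₀ ξ₁ … ξ_L c`. -/
def SymbSpace.closeUp {s : ℕ} (ξ : SymbSpace s) (L : ℕ) (c : Fin s) (i : ℤ) : Fin s :=
  if i % (L + 2 : ℕ) = L + 1 then c else ξ.1 (i % (L + 2 : ℕ))

lemma SymbSpace.closeUp_periodic {s : ℕ} (ξ : SymbSpace s) (L : ℕ) (c : Fin s) :
    Function.Periodic (ξ.closeUp L c) (L + 2 : ℕ) := fun i => by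
  simp only [SymbSpace.closeUp, Int.add_emod_right]

lemma SymbSpace.closeUp_of_le {s : ℕ} (ξ : SymbSpace s) {L : ℕ} (c : Fin s) {i : ℤ}
    (hi0 : 0 ≤ i) (hiL : i ≤ L) : ξ.closeUp L c i = ξ.1 i := by
  have : i % (L + 2 : ℕ) = i := Int.emod_eq_of_lt hi0 (by omega)
  simp only [SymbSpace.closeUp, this, if_neg (show i ≠ L + 1 by omega)]

lemma SymbSpace.closeUp_ne_add_one {s : ℕ} (ξ : SymbSpace s) (L : ℕ) {c : Fin s}
    (hcL : c ≠ ξ.1 L) (hc0 : c ≠ ξ.1 0) (i : ℤ) : ξ.closeUp L c i ≠ ξ.closeUp L c (i + 1) := by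
  refine (ξ.closeUp_periodic L c).ne_add_one (by omega) (fun i hi0 hi => ?_) i
  have hclast : ξ.closeUp L c (L + 1) = c := by
    simp [SymbSpace.closeUp, Int.emod_eq_of_lt (show (0 : ℤ) ≤ L + 1 by omega)]
  rcases lt_trichotomy i L with hiL | rfl | hiL
  · rw [ξ.closeUp_of_le c hi0 hiL.le, ξ.closeUp_of_le c (by omega) (by omega)]
    exact ξ.2 i
  · rw [ξ.closeUp_of_le c hi0 le_rfl, hclast]
    exact hcL.symm
  · obtain rfl : i = L + 1 := by omega
    have := (ξ.closeUp_periodic L c) 0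
    rw [hclast, show (L : ℤ) + 1 + 1 = 0 + (L + 2 : ℕ) by push_cast; ring, this,
      ξ.closeUp_of_le c le_rfl (by omega)]
    exact hc0

lemma SymbSpace.exists_periodic_eq_on_Icc {s : ℕ} (hs : 3 ≤ s) (ξ : SymbSpace s) (L : ℕ) :
    ∃ η : SymbSpace s, shift^[L + 2] η = η ∧ ∀ j : ℤ, 0 ≤ j → j ≤ L → η.1 j = ξ.1 j := by
  obtain ⟨c, hcL, hc0⟩ := Fin.exists_ne_and_ne_of_two_lt (ξ.1 L) (ξ.1 0) hs
  refine ⟨⟨ξ.closeUp L c, ξ.closeUp_ne_add_one L hcL hc0⟩, ?_, ?_⟩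
  · exact Subtype.ext <| funext fun i =>
      (shift_iterate_apply _ _ i).trans ((ξ.closeUp_periodic L c) i)
  · exact fun j hj0 hjL => ξ.closeUp_of_le c hj0 hjL

def ExpLocDetWith {s N : ℕ} (φ : SymbSpace s → EuclideanSpace ℝ (Fin N)) (C δ : ℝ) : Prop :=
  ∀ (m m' : ℕ) (ξ ξ' : SymbSpace s),
    (∀ j : ℤ, -(m : ℤ) ≤ j → j ≤ (m' : ℤ) → ξ.1 j = ξ'.1 j) →
    ‖φ ξ - φ ξ'‖ ≤ C * (δ ^ m + δ ^ m')

section Shadowing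

variable {s N : ℕ} {φ : SymbSpace s → EuclideanSpace ℝ (Fin N)} {C δ : ℝ} {ξ η : SymbSpace s}
  {L : ℕ}

lemma ExpLocDetWith.norm_sub_shift_iterate_le (hφ : ExpLocDetWith φ C δ)
    (hηξ : ∀ j : ℤ, 0 ≤ j → j ≤ L → η.1 j = ξ.1 j) {i : ℕ} (hi : i ≤ L) :
    ‖φ (shift^[i] ξ) - φ (shift^[i] η)‖ ≤ C * (δ ^ i + δ ^ (L - i)) :=
  hφ i (L - i) _ _ fun j hj hj' => by
    rw [shift_iterate_apply, shift_iterate_apply]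
    exact (hηξ _ (by omega) (by omega)).symm

lemma ExpLocDetWith.norm_sum_sub_le (hφ : ExpLocDetWith φ C δ) (hC : 0 ≤ C) (hδ0 : 0 ≤ δ)
    (hδ1 : δ < 1) {R : ℝ} (hbdd : ∀ ζ, ‖φ ζ‖ ≤ R)
    (hηξ : ∀ j : ℤ, 0 ≤ j → j ≤ L → η.1 j = ξ.1 j) :
    ‖∑ i ∈ Finset.range (L + 2), (φ (shift^[i] ξ) - φ (shift^[i] η))‖ ≤
      2 * C / (1 - δ) + 2 * R := by
  have hgeom : ∑ i ∈ Finset.range (L + 1), δ ^ i ≤ 1 / (1 - δ) := by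
    have := geom_sum_Ico_le_of_lt_one (m := 0) (n := L + 1) hδ0 hδ1
    rwa [pow_zero, ← Finset.range_eq_Ico] at this
  have hreflect : ∑ i ∈ Finset.range (L + 1), δ ^ (L - i) = ∑ i ∈ Finset.range (L + 1), δ ^ i := by
    simpa using Finset.sum_range_reflect (δ ^ ·) (L + 1)
  calc _ ≤ ∑ i ∈ Finset.range (L + 2), ‖φ (shift^[i] ξ) - φ (shift^[i] η)‖ := norm_sum_le _ _
    _ ≤ ∑ i ∈ Finset.range (L + 1), C * (δ ^ i + δ ^ (L - i)) + (R + R) := by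
      rw [Finset.sum_range_succ]
      gcongr with i hi
      · exact hφ.norm_sub_shift_iterate_le hηξ (Finset.mem_range_succ_iff.1 hi)
      · exact (norm_sub_le _ _).trans (add_le_add (hbdd _) (hbdd _))
    _ = 2 * C * ∑ i ∈ Finset.range (L + 1), δ ^ i + 2 * R := by
      rw [← Finset.mul_sum, Finset.sum_add_distrib, hreflect]
      ring
    _ ≤ 2 * C * (1 / (1 - δ)) + 2 * R := by gcongr
    _ = 2 * C / (1 - δ) + 2 * R := by ring

lemma ExpLocDetWith.norm_birk_sub_le (hφ : ExpLocDetWith φ C δ) (hC : 0 ≤ C) (hδ0 : 0 ≤ δ)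
    (hδ1 : δ < 1) {R : ℝ} (hbdd : ∀ ζ, ‖φ ζ‖ ≤ R)
    (hηξ : ∀ j : ℤ, 0 ≤ j → j ≤ L → η.1 j = ξ.1 j) :
    ‖birk φ (L + 2) ξ - birk φ (L + 2) η‖ ≤ (2 * C / (1 - δ) + 2 * R) / (L + 2 : ℕ) := by
  rw [birk, birk, ← smul_sub, ← Finset.sum_sub_distrib, norm_smul, norm_inv, RCLike.norm_natCast,
    inv_mul_eq_div]
  gcongr
  exact hφ.norm_sum_sub_le hC hδ0 hδ1 hbdd hηξ

end Shadowing

theorem periodic_rotation_vectors_dense_in_pointwise_general (s N : ℕ) (hs : 3 ≤ s)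
    (φ : SymbSpace s → EuclideanSpace ℝ (Fin N))
    (R : ℝ) (hbdd : ∀ ξ, ‖φ ξ‖ ≤ R) (hloc : ExpLocDet φ)
    (ξ : SymbSpace s) (ρ : EuclideanSpace ℝ (Fin N)) (hρ : HasRotVec φ ξ ρ)
    (ε : ℝ) (hε : 0 < ε) :
    ∃ (η : SymbSpace s) (q : ℕ), 0 < q ∧ shift^[q] η = η ∧
      ∃ ρη : EuclideanSpace ℝ (Fin N), HasRotVec φ η ρη ∧ ‖ρ - ρη‖ < ε := by
  obtain ⟨C, hC, δ, hδ0, hδ1, hφ⟩ := hloc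
  replace hφ : ExpLocDetWith φ C δ := hφ
  set D := 2 * C / (1 - δ) + 2 * R
  obtain ⟨L, hξL, hDL⟩ : ∃ L : ℕ, ‖birk φ (L + 2) ξ - ρ‖ < ε / 2 ∧ D / (L + 2 : ℕ) < ε / 2 :=
    ((((tendsto_add_atTop_iff_nat 2).2 hρ).sub_const ρ).norm.eventually_lt_const
      (by simpa using half_pos hε) |>.and <|
      ((tendsto_add_atTop_iff_nat 2).2 (tendsto_const_div_atTop_nhds_zero_nat D))
        |>.eventually_lt_const (half_pos hε)).exists
  obtain ⟨η, hη, hηξ⟩ := SymbSpace.exists_periodic_eq_on_Icc hs ξ L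
  refine ⟨η, L + 2, by omega, hη, _, hasRotVec_birk_of_periodic φ (by omega) hη, ?_⟩
  calc ‖ρ - birk φ (L + 2) η‖
      ≤ ‖birk φ (L + 2) ξ - ρ‖ + ‖birk φ (L + 2) ξ - birk φ (L + 2) η‖ := by
        rw [norm_sub_rev (birk φ _ ξ)]; exact norm_sub_le_norm_sub_add_norm_sub _ _ _
    _ < ε / 2 + ε / 2 := add_lt_add_of_lt_of_le hξL
        ((hφ.norm_birk_sub_le hC.le hδ0.le hδ1 hbdd hηξ).trans hDL.le)
    _ = ε := add_halves ε

/-- if the rotation vector `ρ_φ(ξ)` exists, then for every `ε > 0` there is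
a periodic sequence `η` whose rotation vector is `ε`-close to it; in particular the
rotation vectors of periodic sequences are dense in the pointwise rotation set `J_φ`. -/
theorem periodic_rotation_vectors_dense_in_pointwise (s N : ℕ) (hs : 3 ≤ s) (hN : 1 ≤ N)
    (φ : SymbSpace s → EuclideanSpace ℝ (Fin N))
    (R : ℝ) (hR : 0 < R) (hbdd : ∀ ξ, ‖φ ξ‖ ≤ R) (hloc : ExpLocDet φ)
    (ξ : SymbSpace s) (ρ : EuclideanSpace ℝ (Fin N)) (hρ : HasRotVec φ ξ ρ)
    (ε : ℝ) (hε : 0 < ε) :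
    ∃ (η : SymbSpace s) (q : ℕ), 0 < q ∧ shift^[q] η = η ∧
      ∃ ρη : EuclideanSpace ℝ (Fin N), HasRotVec φ η ρη ∧ ‖ρ - ρη‖ < ε :=
  periodic_rotation_vectors_dense_in_pointwise_general s N hs φ R hbdd hloc ξ ρ hρ ε hε
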